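/- In the ring ℤ⟨⟨X_1,...,X_n⟩⟩ of non-commutative formal power series over ℤ, fix i and a map Δ assigning to each finite sequence (j_1,...,j_s) of indices an integer Δ(j_1...j_s i) such that Δ(j_1...j_s i) divides Δ(k_1...k_t i) whenever (k_1,...,k_t) is obtained from (j_1,...,j_s) by deleting at least one entry and cyclically permuting the rest — equivalently, assume Δ(k_1...k_{s+t} i) divides Δ(j_1...j_s i) whenever k_1...k_{s+t} is obtained from j_1...j_s by inserting t ≥ 1 indices. Fix q and define D_i to be the set of power series Σ ν(j_1...j_s) X_{j_1}⋯X_{j_s} such that Δ(j_1...j_s i) divides ν(j_1...j_s) for all s < q. Then D_i is a two-sided ideal of ℤ⟨⟨X_1,...,X_n⟩⟩. -/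

import Mathlib

/-- The ring `ℤ⟨⟨X_i : i ∈ σ⟩⟩` of formal power series in non-commuting variables,
realized as coefficient functions on words (monomials) in the alphabet `σ`. -/
def NCSeries (σ : Type*) : Type _ := List σ → ℤ

instance {σ : Type*} : AddCommGroup (NCSeries σ) :=
  inferInstanceAs (AddCommGroup (List σ → ℤ))

instance {σ : Type*} : One (NCSeries σ) :=
  ⟨fun w => match w with | [] => 1 | _ => 0⟩

/-- Multiplication of non-commutative power series: convolution over all
splittings of a word. -/
instance {σ : Type*} : Mul (NCSeries σ) :=
  ⟨fun f g => fun w => ∑ i ∈ Finset.range (w.length + 1), f (w.take i) * g (w.drop i)⟩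

/-- The variable `X_j`, as a power series. -/
def Xvar {σ : Type*} [DecidableEq σ] (j : σ) : NCSeries σ :=
  fun w => if w = [j] then 1 else 0

/-- The Magnus expansion of a single letter: `α_i ↦ 1 + X_i` and
`α_i⁻¹ ↦ 1 - X_i + X_i² - ⋯`. -/
def letterE {σ : Type*} [DecidableEq σ] (l : σ × Bool) : NCSeries σ := fun w =>
  if l.2 then (if w = [] ∨ w = [l.1] then (1 : ℤ) else 0)
  else (if ∀ a ∈ w, a = l.1 then ((-1) ^ w.length : ℤ) else 0)

/-- The Magnus expansion `E : FreeGroup σ → ℤ⟨⟨X_i : i ∈ σ⟩⟩`, computed as the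
product of the Magnus expansions of the letters of the reduced word. -/
def magnus {σ : Type*} [DecidableEq σ] (x : FreeGroup σ) : NCSeries σ :=
  (FreeGroup.toWord x).foldr (fun l acc => letterE l * acc) 1

/-- The `q`-th term of the lower central series, indexed as in Milnor's paper:
`lcs G 1 = G`, `lcs G (q+1) = [G, lcs G q]`. -/
def lcs (G : Type*) [Group G] (q : ℕ) : Subgroup G := (⊤ : Subgroup G).lowerCentralSeries (q - 1)


namespace NCSeries

variable {σ : Type*}

lemma mul_apply (f g : NCSeries σ) (w : List σ) :
    (f * g) w = ∑ i ∈ Finset.range (w.length + 1), f (w.take i) * g (w.drop i) := rfl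

lemma mul_apply_nil (f g : NCSeries σ) : (f * g) [] = f [] * g [] := by
  simp [mul_apply]

lemma add_apply (f g : NCSeries σ) (w : List σ) : (f + g) w = f w + g w := rfl

lemma neg_apply (f : NCSeries σ) (w : List σ) : (-f) w = -f w := rfl

/-- The ideal `D_i` of the paper, with `Δ w` standing for `Δ(w i)`. -/
def deltaDivisible (Δ : List σ → ℤ) (q : ℕ) : Set (NCSeries σ) :=
  {f | f [] = 0 ∧ ∀ w : List σ, w ≠ [] → w.length < q → Δ w ∣ f w}

variable {Δ : List σ → ℤ} {q : ℕ}

lemma zero_mem_deltaDivisible : (0 : NCSeries σ) ∈ deltaDivisible Δ q :=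
  ⟨rfl, fun _ _ _ => dvd_zero _⟩

lemma add_mem_deltaDivisible {f g : NCSeries σ} (hf : f ∈ deltaDivisible Δ q)
    (hg : g ∈ deltaDivisible Δ q) : f + g ∈ deltaDivisible Δ q :=
  ⟨by rw [add_apply, hf.1, hg.1, add_zero],
    fun w hw hq => dvd_add (hf.2 w hw hq) (hg.2 w hw hq)⟩

lemma neg_mem_deltaDivisible {f : NCSeries σ} (hf : f ∈ deltaDivisible Δ q) :
    -f ∈ deltaDivisible Δ q :=
  ⟨by rw [neg_apply, hf.1, neg_zero], fun w hw hq => (hf.2 w hw hq).neg_right⟩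

variable (hΔ : ∀ J K : List σ, J ≠ [] → J.Sublist K → J ≠ K → Δ K ∣ Δ J)
include hΔ

/-- Multiplying by any series only moves coefficients of subwords (prefixes or suffixes) onto
a word, and the divisibility hypothesis makes `Δ w` divide all of those. -/
lemma dvd_apply_of_sublist {f : NCSeries σ} (hf : f ∈ deltaDivisible Δ q) {v w : List σ}
    (hvw : v.Sublist w) (hw : w ≠ []) (hq : w.length < q) : Δ w ∣ f v := by
  rcases eq_or_ne v [] with rfl | hv
  · simp [hf.1]
  rcases eq_or_ne v w with rfl | hne
  · exact hf.2 v hv hq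
  · exact (hΔ v w hv hvw hne).trans (hf.2 v hv (hvw.length_le.trans_lt hq))

lemma mul_mem_deltaDivisible_left (r : NCSeries σ) {f : NCSeries σ}
    (hf : f ∈ deltaDivisible Δ q) : r * f ∈ deltaDivisible Δ q := by
  refine ⟨by rw [mul_apply_nil, hf.1, mul_zero], fun w hw hq => ?_⟩
  rw [mul_apply]
  exact Finset.dvd_sum fun i _ =>
    (dvd_apply_of_sublist hΔ hf (w.drop_sublist i) hw hq).mul_left _

lemma mul_mem_deltaDivisible_right (r : NCSeries σ) {f : NCSeries σ}
    (hf : f ∈ deltaDivisible Δ q) : f * r ∈ deltaDivisible Δ q := by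
  refine ⟨by rw [mul_apply_nil, hf.1, zero_mul], fun w hw hq => ?_⟩
  rw [mul_apply]
  exact Finset.dvd_sum fun i _ =>
    (dvd_apply_of_sublist hΔ hf (w.take_sublist i) hw hq).mul_right _

end NCSeries

theorem stmt16 (n q : ℕ) (Δ : List (Fin n) → ℤ)
    (hΔ : ∀ J K : List (Fin n), J ≠ [] → J.Sublist K → J ≠ K → Δ K ∣ Δ J) :
    let D : Set (NCSeries (Fin n)) :=
      {f | f [] = 0 ∧ ∀ w : List (Fin n), w ≠ [] → w.length < q → Δ w ∣ f w}
    (0 : NCSeries (Fin n)) ∈ D ∧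
    (∀ f g, f ∈ D → g ∈ D → f + g ∈ D) ∧
    (∀ f, f ∈ D → -f ∈ D) ∧
    (∀ r f, f ∈ D → r * f ∈ D) ∧
    (∀ r f, f ∈ D → f * r ∈ D) :=
  ⟨NCSeries.zero_mem_deltaDivisible, fun _ _ => NCSeries.add_mem_deltaDivisible,
    fun _ => NCSeries.neg_mem_deltaDivisible, fun r _ => NCSeries.mul_mem_deltaDivisible_left hΔ r,
    fun r _ => NCSeries.mul_mem_deltaDivisible_right hΔ r⟩
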